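/- Uniqueness and global optimality for the minimax dual problem: Assume −1 < λ₁ < 0. If τ̄ ∈ (−λ₁, 1) satisfies the critical-point equation ½Σ_{i=1}^n f̂ᵢ²/(λᵢ+τ̄)² + d − (1/β)log(τ̄/(1−τ̄)) = 0, then τ̄ is the unique such point in (−λ₁, 1), and x̄ = (A + τ̄I)⁻¹f is a global minimizer of Π₂ on ℝⁿ. -/

import Mathlib

/-!
Canonical duality. Softplus `t ↦ log (1 + exp t)` is the convex conjugate of the negative binary
entropy, so for every `τ ∈ (0, 1)` it dominates `τ t + H(τ)`, with equality at `t = log (τ / (1 - τ))`.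
In the eigenbasis of `A` this turns `Π₂` into a separable quadratic plus a constant and gives the
weak duality `Π₂^d(τ) ≤ Π₂(x)` whenever every `λᵢ + τ > 0`. At a critical point `τ̄` both
inequalities are equalities at `x̄`, so `x̄` attains the lower bound. Uniqueness holds because
`(Π₂^d)'` is strictly decreasing on `(-λ₁, 1)`.
-/

open Matrix Real Set

namespace Real

theorem mul_add_binEntropy_le_log_one_add_exp {p : ℝ} (hp₀ : 0 < p) (hp₁ : p < 1) (t : ℝ) :
    p * t + binEntropy p ≤ log (1 + exp t) := by
  have hq : 0 < 1 - p := by linarith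
  have key := strictConcaveOn_log_Ioi.concaveOn.2 (x := exp t * p⁻¹) (y := (1 - p)⁻¹)
    (mem_Ioi.2 (by positivity)) (mem_Ioi.2 (by positivity)) hp₀.le hq.le (by ring)
  have hsum : p • (exp t * p⁻¹) + (1 - p) • (1 - p)⁻¹ = 1 + exp t := by
    simp only [smul_eq_mul]; field_simp; ring
  rw [hsum, smul_eq_mul, smul_eq_mul, log_mul (exp_pos t).ne' (inv_pos.2 hp₀).ne', log_exp] at key
  rw [binEntropy]
  linarith

theorem mul_add_binEntropy_eq_log_one_add_exp_logit {p : ℝ} (hp₀ : 0 < p) (hp₁ : p < 1) :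
    p * log (p / (1 - p)) + binEntropy p = log (1 + exp (log (p / (1 - p)))) := by
  have hq : 0 < 1 - p := by linarith
  have h : 1 + p / (1 - p) = (1 - p)⁻¹ := by field_simp; ring
  rw [exp_log (div_pos hp₀ hq), h, binEntropy, log_div hp₀.ne' hq.ne', log_inv, log_inv]
  ring

theorem strictMonoOn_log_div_one_sub : StrictMonoOn (fun p : ℝ ↦ log (p / (1 - p))) (Ioo 0 1) := by
  rintro s ⟨hs₀, hs₁⟩ t ⟨ht₀, ht₁⟩ hst
  refine log_lt_log (div_pos hs₀ (by linarith)) ?_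
  rw [div_lt_div_iff₀ (by linarith) (by linarith)]
  nlinarith

end Real

theorem neg_half_sq_div_le {c : ℝ} (hc : 0 < c) (a y : ℝ) :
    -(1 / 2) * (a ^ 2 / c) ≤ 1 / 2 * c * y ^ 2 - a * y := by
  have : 1 / 2 * c * y ^ 2 - a * y - -(1 / 2) * (a ^ 2 / c) = c / 2 * (y - a / c) ^ 2 := by
    field_simp; ring
  nlinarith [this, sq_nonneg (y - a / c)]

theorem half_mul_sq_sub_eq_neg_half_sq_div {c : ℝ} (hc : c ≠ 0) (a : ℝ) :
    1 / 2 * c * (a / c) ^ 2 - a * (a / c) = -(1 / 2) * (a ^ 2 / c) := by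
  field_simp; ring

variable {ι : Type*} [Fintype ι]

noncomputable def primal (A : Matrix ι ι ℝ) (f : ι → ℝ) (β d : ℝ) (x : ι → ℝ) : ℝ :=
  (1 / 2) * (x ⬝ᵥ A *ᵥ x) - f ⬝ᵥ x +
    (1 / β) * Real.log (1 + Real.exp (β * ((1 / 2) * (x ⬝ᵥ x) + d)))

/-- `Π₂^d`; its entropy term `binEntropy τ / β` is `-(1/β) (τ log τ + (1 - τ) log (1 - τ))`. -/
noncomputable def canonicalDual (lam fhat : ι → ℝ) (β d τ : ℝ) : ℝ :=
  -(1 / 2) * ∑ i, fhat i ^ 2 / (lam i + τ) + d * τ + binEntropy τ / β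

/-- `(Π₂^d)'`, whose zeros are the critical points of the dual problem. -/
noncomputable def dualDeriv (lam fhat : ι → ℝ) (β d τ : ℝ) : ℝ :=
  (1 / 2) * (∑ i, fhat i ^ 2 / (lam i + τ) ^ 2) + d - (1 / β) * Real.log (τ / (1 - τ))

theorem dualDeriv_strictAntiOn {lam : ι → ℝ} (fhat : ι → ℝ) {β : ℝ} (hβ : 0 < β) (d : ℝ)
    {a : ℝ} (ha : 0 ≤ a) (hlam : ∀ i, 0 ≤ lam i + a) :
    StrictAntiOn (dualDeriv lam fhat β d) (Ioo a 1) := by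
  rintro s ⟨has, hs₁⟩ t ⟨hat, ht₁⟩ hst
  have hsum : ∑ i, fhat i ^ 2 / (lam i + t) ^ 2 ≤ ∑ i, fhat i ^ 2 / (lam i + s) ^ 2 := by
    refine Finset.sum_le_sum fun i _ ↦ div_le_div_of_nonneg_left (sq_nonneg _) ?_ ?_
    · exact pow_pos (by linarith [hlam i]) 2
    · gcongr; linarith [hlam i]
  have hlog := strictMonoOn_log_div_one_sub ⟨ha.trans_lt has, hs₁⟩ ⟨ha.trans_lt hat, ht₁⟩ hst
  have := mul_lt_mul_of_pos_left hlog (one_div_pos.2 hβ)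
  simp only [dualDeriv]
  linarith

theorem quadratic_diagonal_add_mul [DecidableEq ι] (lam fhat y : ι → ℝ) (τ d : ℝ) :
    (1 / 2) * (y ⬝ᵥ diagonal lam *ᵥ y) - fhat ⬝ᵥ y + τ * ((1 / 2) * (y ⬝ᵥ y) + d) =
      ∑ i, (1 / 2 * (lam i + τ) * y i ^ 2 - fhat i * y i) + d * τ := by
  have h : ∑ i, (1 / 2 * (lam i + τ) * y i ^ 2 - fhat i * y i) =
      1 / 2 * ∑ i, y i * (lam i * y i) + τ * (1 / 2 * ∑ i, y i * y i) - ∑ i, fhat i * y i := by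
    simp only [Finset.mul_sum, ← Finset.sum_add_distrib, ← Finset.sum_sub_distrib]
    exact Finset.sum_congr rfl fun i _ ↦ by ring
  simp only [dotProduct, mulVec_diagonal]
  linarith

theorem canonicalDual_le_primal_diagonal [DecidableEq ι] {lam : ι → ℝ} (fhat : ι → ℝ)
    {β : ℝ} (hβ : 0 < β) (d : ℝ) {τ : ℝ} (hτ₀ : 0 < τ) (hτ₁ : τ < 1)
    (hlam : ∀ i, 0 < lam i + τ) (y : ι → ℝ) :
    canonicalDual lam fhat β d τ ≤ primal (diagonal lam) fhat β d y := by
  have hlog : τ * ((1 / 2) * (y ⬝ᵥ y) + d) + binEntropy τ / β ≤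
      (1 / β) * log (1 + exp (β * ((1 / 2) * (y ⬝ᵥ y) + d))) := by
    set s := (1 / 2) * (y ⬝ᵥ y) + d
    calc τ * s + binEntropy τ / β = (τ * (β * s) + binEntropy τ) / β := by field_simp
      _ ≤ log (1 + exp (β * s)) / β := by
        gcongr; exact mul_add_binEntropy_le_log_one_add_exp hτ₀ hτ₁ _
      _ = (1 / β) * log (1 + exp (β * s)) := by ring
  have hquad : -(1 / 2) * ∑ i, fhat i ^ 2 / (lam i + τ) ≤
      ∑ i, (1 / 2 * (lam i + τ) * y i ^ 2 - fhat i * y i) := by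
    rw [Finset.mul_sum]
    exact Finset.sum_le_sum fun i _ ↦ neg_half_sq_div_le (hlam i) _ _
  have := quadratic_diagonal_add_mul lam fhat y τ d
  simp only [canonicalDual, primal]
  linarith

theorem primal_diagonal_eq_canonicalDual [DecidableEq ι] {lam fhat : ι → ℝ}
    {β : ℝ} (hβ : 0 < β) {d τ : ℝ} (hτ₀ : 0 < τ) (hτ₁ : τ < 1)
    (hlam : ∀ i, 0 < lam i + τ) (hcrit : dualDeriv lam fhat β d τ = 0) :
    primal (diagonal lam) fhat β d (fun i ↦ fhat i / (lam i + τ)) =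
      canonicalDual lam fhat β d τ := by
  set y : ι → ℝ := fun i ↦ fhat i / (lam i + τ)
  have hnorm : y ⬝ᵥ y = ∑ i, fhat i ^ 2 / (lam i + τ) ^ 2 := by
    simp only [dotProduct, y, ← sq, div_pow]
  have hs : β * ((1 / 2) * (y ⬝ᵥ y) + d) = log (τ / (1 - τ)) := by
    simp only [dualDeriv] at hcrit
    rw [hnorm]
    field_simp at hcrit ⊢
    linarith
  have hlog : (1 / β) * log (1 + exp (β * ((1 / 2) * (y ⬝ᵥ y) + d))) =
      τ * ((1 / 2) * (y ⬝ᵥ y) + d) + binEntropy τ / β := by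
    rw [hs, ← mul_add_binEntropy_eq_log_one_add_exp_logit hτ₀ hτ₁, ← hs]
    field_simp
  have hquad : ∑ i, (1 / 2 * (lam i + τ) * y i ^ 2 - fhat i * y i) =
      -(1 / 2) * ∑ i, fhat i ^ 2 / (lam i + τ) := by
    rw [Finset.mul_sum]
    exact Finset.sum_congr rfl fun i _ ↦ half_mul_sq_sub_eq_neg_half_sq_div (hlam i).ne' _
  have := quadratic_diagonal_add_mul lam fhat y τ d
  simp only [canonicalDual, primal]
  linarith

theorem dotProduct_mulVec_conj {R : Type*} [CommSemiring R] (U B : Matrix ι ι R) (x y : ι → R) :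
    x ⬝ᵥ (U * B * Uᵀ) *ᵥ y = (Uᵀ *ᵥ x) ⬝ᵥ B *ᵥ (Uᵀ *ᵥ y) := by
  rw [← mulVec_mulVec, ← mulVec_mulVec, dotProduct_mulVec, ← mulVec_transpose]

theorem transpose_mulVec_dotProduct_transpose_mulVec {R : Type*} [CommSemiring R]
    [DecidableEq ι] {U : Matrix ι ι R} (hU : U * Uᵀ = 1) (x y : ι → R) :
    (Uᵀ *ᵥ x) ⬝ᵥ (Uᵀ *ᵥ y) = x ⬝ᵥ y := by
  simpa [hU] using (dotProduct_mulVec_conj U 1 x y).symm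

theorem primal_conj [DecidableEq ι] {U : Matrix ι ι ℝ} (hU : U * Uᵀ = 1) (B : Matrix ι ι ℝ)
    (f : ι → ℝ) (β d : ℝ) (x : ι → ℝ) :
    primal (U * B * Uᵀ) f β d x = primal B (Uᵀ *ᵥ f) β d (Uᵀ *ᵥ x) := by
  simp only [primal, dotProduct_mulVec_conj, transpose_mulVec_dotProduct_transpose_mulVec hU]

theorem conj_diagonal_add_smul_one {R : Type*} [CommRing R] [DecidableEq ι]
    {U : Matrix ι ι R} (hU : U * Uᵀ = 1) (lam : ι → R) (τ : R) :
    U * diagonal lam * Uᵀ + τ • 1 = U * diagonal (fun i ↦ lam i + τ) * Uᵀ := by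
  have : diagonal (fun i ↦ lam i + τ) = diagonal lam + τ • 1 := by
    rw [smul_one_eq_diagonal, diagonal_add]
  rw [this, Matrix.mul_add, Matrix.add_mul, Matrix.mul_smul, Matrix.smul_mul, Matrix.mul_one, hU]

theorem transpose_mulVec_inv_conj_diagonal_mulVec {K : Type*} [Field K] [DecidableEq ι]
    {U : Matrix ι ι K} (hU : U * Uᵀ = 1) {c : ι → K} (hc : ∀ i, c i ≠ 0) (f : ι → K) :
    Uᵀ *ᵥ ((U * diagonal c * Uᵀ)⁻¹ *ᵥ f) = fun i ↦ (Uᵀ *ᵥ f) i / c i := by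
  have hUU : Uᵀ * U = 1 := mul_eq_one_comm.mp hU
  have hcc : diagonal c * diagonal (fun i ↦ (c i)⁻¹) = 1 := by
    rw [diagonal_mul_diagonal, ← diagonal_one]
    exact congrArg diagonal (funext fun i ↦ mul_inv_cancel₀ (hc i))
  have hinv : (U * diagonal c * Uᵀ)⁻¹ = U * diagonal (fun i ↦ (c i)⁻¹) * Uᵀ := by
    refine inv_eq_right_inv ?_
    simp only [Matrix.mul_assoc]
    rw [← Matrix.mul_assoc Uᵀ U, hUU, Matrix.one_mul, ← Matrix.mul_assoc (diagonal c), hcc,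
      Matrix.one_mul, hU]
  ext i
  rw [hinv, mulVec_mulVec, ← Matrix.mul_assoc, ← Matrix.mul_assoc, hUU, Matrix.one_mul,
    ← mulVec_mulVec, mulVec_diagonal, div_eq_inv_mul]

theorem minimax_uniqueness_global_general
    {n : ℕ} (hn : 0 < n)
    (A : Matrix (Fin n) (Fin n) ℝ)
    (lam : Fin n → ℝ) (hsort : ∀ i j : Fin n, i ≤ j → lam i ≤ lam j)
    (U : Matrix (Fin n) (Fin n) ℝ) (hUorth : U * Uᵀ = 1)
    (hAeig : A = U * Matrix.diagonal lam * Uᵀ)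
    (f : Fin n → ℝ) (fhat : Fin n → ℝ) (hfhat : fhat = Uᵀ.mulVec f)
    (lam1 : ℝ) (hlam1 : lam1 = lam ⟨0, hn⟩)
    (β : ℝ) (hβ : 0 < β) (d : ℝ) (hlamhi : lam1 < 0)
    (Pi2 : (Fin n → ℝ) → ℝ)
    (hPi2 : Pi2 = fun x : Fin n → ℝ => (1/2) * (x ⬝ᵥ A.mulVec x) - f ⬝ᵥ x
        + (1/β) * Real.log (1 + Real.exp (β * ((1/2) * (x ⬝ᵥ x) + d))))
    (tb : ℝ) (htb : tb ∈ Set.Ioo (-lam1) 1)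
    (hcrit : (1/2) * (∑ i, fhat i ^ 2 / (lam i + tb) ^ 2) + d - (1/β) * Real.log (tb / (1 - tb)) = 0)
    (xb : Fin n → ℝ) (hxb : xb = (A + tb • (1 : Matrix (Fin n) (Fin n) ℝ))⁻¹.mulVec f) :
    (∀ τ ∈ Set.Ioo (-lam1) 1, (1/2) * (∑ i, fhat i ^ 2 / (lam i + τ) ^ 2) + d - (1/β) * Real.log (τ / (1 - τ)) = 0 → τ = tb) ∧
    (∀ x : Fin n → ℝ, Pi2 xb ≤ Pi2 x) := by
  have hlam1_le : ∀ i, lam1 ≤ lam i := fun i ↦ hlam1 ▸ hsort _ _ (Nat.zero_le i.val)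
  have htb₀ : 0 < tb := by linarith [htb.1]
  have hpos : ∀ i, 0 < lam i + tb := fun i ↦ by linarith [hlam1_le i, htb.1]
  refine ⟨fun τ hτ hτcrit ↦ ?_, fun x ↦ ?_⟩
  · exact (dualDeriv_strictAntiOn fhat hβ d (neg_nonneg.2 hlamhi.le)
      fun i ↦ by linarith [hlam1_le i]).injOn hτ htb (hτcrit.trans hcrit.symm)
  have hPi2_eq : ∀ x, Pi2 x = primal (diagonal lam) fhat β d (Uᵀ *ᵥ x) := fun x ↦ by
    rw [hPi2, hfhat, ← primal_conj hUorth, ← hAeig]; rfl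
  have hxb_eigen : Uᵀ *ᵥ xb = fun i ↦ fhat i / (lam i + tb) := by
    rw [hxb, hAeig, conj_diagonal_add_smul_one hUorth,
      transpose_mulVec_inv_conj_diagonal_mulVec hUorth fun i ↦ (hpos i).ne', hfhat]
  calc Pi2 xb = canonicalDual lam fhat β d tb := by
        rw [hPi2_eq, hxb_eigen, primal_diagonal_eq_canonicalDual hβ htb₀ htb.2 hpos hcrit]
    _ ≤ Pi2 x := by
        rw [hPi2_eq]; exact canonicalDual_le_primal_diagonal fhat hβ d htb₀ htb.2 hpos _

/-- **Uniqueness and global optimality for the minimax dual problem**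
(Proposition 2 of Chen–Gao). -/
theorem minimax_uniqueness_global
    {n : ℕ} (hn : 0 < n)
    (A : Matrix (Fin n) (Fin n) ℝ) (hA : A.IsSymm)
    (lam : Fin n → ℝ) (hsort : ∀ i j : Fin n, i ≤ j → lam i ≤ lam j)
    (U : Matrix (Fin n) (Fin n) ℝ) (hUorth : U * Uᵀ = 1)
    (hAeig : A = U * Matrix.diagonal lam * Uᵀ)
    (f : Fin n → ℝ) (fhat : Fin n → ℝ) (hfhat : fhat = Uᵀ.mulVec f)
    (lam1 : ℝ) (hlam1 : lam1 = lam ⟨0, hn⟩)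
    (k : ℕ) (hk0 : 0 < k) (hkn : k ≤ n)
    (heqk : ∀ i : Fin n, (i : ℕ) < k → lam i = lam1)
    (hltk : ∀ i : Fin n, k ≤ (i : ℕ) → lam1 < lam i)
    (β : ℝ) (hβ : 0 < β) (d : ℝ) (hlamlo : -1 < lam1) (hlamhi : lam1 < 0)
    (Pi2 : (Fin n → ℝ) → ℝ)
    (hPi2 : Pi2 = fun x : Fin n → ℝ => (1/2) * (x ⬝ᵥ A.mulVec x) - f ⬝ᵥ x
        + (1/β) * Real.log (1 + Real.exp (β * ((1/2) * (x ⬝ᵥ x) + d))))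
    (tb : ℝ) (htb : tb ∈ Set.Ioo (-lam1) 1)
    (hcrit : (1/2) * (∑ i, fhat i ^ 2 / (lam i + tb) ^ 2) + d - (1/β) * Real.log (tb / (1 - tb)) = 0)
    (xb : Fin n → ℝ) (hxb : xb = (A + tb • (1 : Matrix (Fin n) (Fin n) ℝ))⁻¹.mulVec f) :
    (∀ τ ∈ Set.Ioo (-lam1) 1, (1/2) * (∑ i, fhat i ^ 2 / (lam i + τ) ^ 2) + d - (1/β) * Real.log (τ / (1 - τ)) = 0 → τ = tb) ∧
    (∀ x : Fin n → ℝ, Pi2 xb ≤ Pi2 x) :=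
  minimax_uniqueness_global_general hn A lam hsort U hUorth hAeig f fhat hfhat lam1 hlam1 β hβ d
    hlamhi Pi2 hPi2 tb htb hcrit xb hxb
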